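/- The set Σ_{c,c'}^N of N-layered convolutional neural networks is a vector space: it contains 0, and is closed under scalar multiplication and pointwise addition of functions. -/

import Mathlib

/-- Zero-extension of a finite vector to an integer-indexed sequence. -/
def zpad (d : ℕ) (x : Fin d → ℝ) (m : ℤ) : ℝ :=
  if h : 0 ≤ m ∧ m < (d : ℤ) then x ⟨m.toNat, by omega⟩ else 0

/-- Zero padding convolution with kernel `w` supported on `[-k, k]`. -/
noncomputable def zconv (d k : ℕ) (w : ℤ → ℝ) (x : Fin d → ℝ) (i : Fin d) : ℝ :=
  ∑ j ∈ Finset.Icc (-(k : ℤ)) (k : ℤ), w j * zpad d x ((i : ℤ) + j)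

/-- A zero-padding convolutional layer with `c₁` input and `c₂` output channels:
`C(x)^i = ∑_j w_{i,j} ⊛ x^j + δ_i · 1_d` for some kernel size `2k+1`. -/
def IsConvLayer (d c₁ c₂ : ℕ)
    (C : (Fin c₁ → Fin d → ℝ) → (Fin c₂ → Fin d → ℝ)) : Prop :=
  ∃ (k : ℕ) (w : Fin c₂ → Fin c₁ → ℤ → ℝ) (δ : Fin c₂ → ℝ),
    ∀ x i p, C x i p = (∑ j, zconv d k (w i j) (x j) p) + δ i

/-- `InSigma σ d N c c' f`: `f ∈ Σ_{c,c'}^N`, i.e. `f = C_N ∘ σ ∘ C_{N-1} ∘ ⋯ ∘ σ ∘ C_1`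
for some zero-padding convolutional layers with arbitrary intermediate channel sizes. -/
def InSigma (σ : ℝ → ℝ) (d : ℕ) :
    (N : ℕ) → (c c' : ℕ) → ((Fin c → Fin d → ℝ) → (Fin c' → Fin d → ℝ)) → Prop
  | 0, _, _, _ => False
  | 1, c, c', f => IsConvLayer d c c' f
  | (N + 2), c, c', f =>
      ∃ c₁ C, IsConvLayer d c c₁ C ∧
        ∃ g, InSigma σ d (N + 1) c₁ c' g ∧ ∀ x, f x = g (fun i p => σ (C x i p))

/-! Zero and scalar multiples only touch the last layer. For a sum, run both networks side by
side: concatenate their first layers and let each remaining network read its own block of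
channels. Such a restriction to a block is absorbed into the next layer, so what remains is a
sum of two networks one layer shallower, handled by induction on the depth. Layers with kernels
of different radii are compared after padding the smaller kernel with zeros. -/

open Filter

lemma zconv_add (d k : ℕ) (w v : ℤ → ℝ) (x : Fin d → ℝ) (p : Fin d) :
    zconv d k (w + v) x p = zconv d k w x p + zconv d k v x p := by
  simp only [zconv, Pi.add_apply, add_mul, Finset.sum_add_distrib]

lemma zconv_const_mul (d k : ℕ) (a : ℝ) (w : ℤ → ℝ) (x : Fin d → ℝ) (p : Fin d) :
    zconv d k (fun m => a * w m) x p = a * zconv d k w x p := by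
  simp only [zconv, Finset.mul_sum, mul_assoc]

lemma zconv_sum (d k : ℕ) {ι : Type*} (s : Finset ι) (w : ι → ℤ → ℝ) (x : Fin d → ℝ)
    (p : Fin d) :
    zconv d k (fun m => ∑ l ∈ s, w l m) x p = ∑ l ∈ s, zconv d k (w l) x p := by
  simp only [zconv, Finset.sum_mul]
  exact Finset.sum_comm

lemma zconv_indicator_of_le (d : ℕ) {k k' : ℕ} (h : k ≤ k') (w : ℤ → ℝ) (x : Fin d → ℝ)
    (p : Fin d) :
    zconv d k' ((Finset.Icc (-(k : ℤ)) k : Set ℤ).indicator w) x p = zconv d k w x p := by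
  have hsub : Finset.Icc (-(k : ℤ)) k ⊆ Finset.Icc (-(k' : ℤ)) k' :=
    Finset.Icc_subset_Icc (by omega) (by omega)
  unfold zconv
  refine Eq.trans ?_ (Finset.sum_indicator_subset _ hsub)
  exact Finset.sum_congr rfl fun j _ =>
    (Set.indicator_mul_left _ w fun m => zpad d x (p + m)).symm

namespace IsConvLayer

variable {d c₁ c₂ : ℕ}

lemma eventually_radius {C : (Fin c₁ → Fin d → ℝ) → (Fin c₂ → Fin d → ℝ)}
    (hC : IsConvLayer d c₁ c₂ C) :
    ∀ᶠ k in atTop, ∃ (w : Fin c₂ → Fin c₁ → ℤ → ℝ) (δ : Fin c₂ → ℝ),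
      ∀ x i p, C x i p = (∑ j, zconv d k (w i j) (x j) p) + δ i := by
  obtain ⟨k, w, δ, hw⟩ := hC
  filter_upwards [eventually_ge_atTop k] with k' hk
  exact ⟨fun i j => (Finset.Icc (-(k : ℤ)) k : Set ℤ).indicator (w i j), δ,
    fun x i p => by simp only [hw, zconv_indicator_of_le d hk]⟩

lemma zero : IsConvLayer d c₁ c₂ (fun _ => 0) :=
  ⟨0, fun _ _ _ => 0, fun _ => 0, fun x i p => by simp [zconv]⟩

lemma smul (a : ℝ) {C : (Fin c₁ → Fin d → ℝ) → (Fin c₂ → Fin d → ℝ)}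
    (hC : IsConvLayer d c₁ c₂ C) : IsConvLayer d c₁ c₂ (fun x => a • C x) := by
  obtain ⟨k, w, δ, hw⟩ := hC
  refine ⟨k, fun i j m => a * w i j m, fun i => a * δ i, fun x i p => ?_⟩
  simp only [Pi.smul_apply, smul_eq_mul, hw, zconv_const_mul, mul_add, Finset.mul_sum]

lemma add {C D : (Fin c₁ → Fin d → ℝ) → (Fin c₂ → Fin d → ℝ)}
    (hC : IsConvLayer d c₁ c₂ C) (hD : IsConvLayer d c₁ c₂ D) :
    IsConvLayer d c₁ c₂ (fun x => C x + D x) := by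
  obtain ⟨k, ⟨w, δ, hw⟩, ⟨v, ε, hv⟩⟩ := (hC.eventually_radius.and hD.eventually_radius).exists
  refine ⟨k, w + v, δ + ε, fun x i p => ?_⟩
  simp only [Pi.add_apply, hw, hv, zconv_add, Finset.sum_add_distrib]
  ring

lemma comp_reindex {c₀ : ℕ} (e : Fin c₀ → Fin c₁)
    {C : (Fin c₀ → Fin d → ℝ) → (Fin c₂ → Fin d → ℝ)} (hC : IsConvLayer d c₀ c₂ C) :
    IsConvLayer d c₁ c₂ (fun x => C (x ∘ e)) := by
  obtain ⟨k, w, δ, hw⟩ := hC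
  refine ⟨k, fun i j m => ∑ l ∈ Finset.univ.filter (e · = j), w i l m, δ, fun x i p => ?_⟩
  simp only [hw, Function.comp_apply, zconv_sum]
  congr 1
  refine (Finset.sum_fiberwise_of_maps_to (fun l _ => Finset.mem_univ (e l)) _).symm.trans ?_
  refine Finset.sum_congr rfl fun j _ => Finset.sum_congr rfl fun l hl => ?_
  rw [(Finset.mem_filter.mp hl).2]

lemma append {c₃ : ℕ} {C : (Fin c₁ → Fin d → ℝ) → (Fin c₂ → Fin d → ℝ)}
    {D : (Fin c₁ → Fin d → ℝ) → (Fin c₃ → Fin d → ℝ)}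
    (hC : IsConvLayer d c₁ c₂ C) (hD : IsConvLayer d c₁ c₃ D) :
    IsConvLayer d c₁ (c₂ + c₃) (fun x => Fin.append (C x) (D x)) := by
  obtain ⟨k, ⟨w, δ, hw⟩, ⟨v, ε, hv⟩⟩ := (hC.eventually_radius.and hD.eventually_radius).exists
  refine ⟨k, Fin.append w v, Fin.append δ ε, fun x i p => ?_⟩
  induction i using Fin.addCases with
  | left i => simp only [Fin.append_left, hw]
  | right i => simp only [Fin.append_right, hv]

end IsConvLayer

namespace InSigma

variable {σ : ℝ → ℝ} {d : ℕ}

lemma zero : ∀ {N : ℕ}, 1 ≤ N → ∀ c c', InSigma σ d N c c' (fun _ => 0)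
  | 1, _, _, _ => IsConvLayer.zero
  | _ + 2, _, c, _ => ⟨c, fun _ => 0, IsConvLayer.zero, fun _ => 0, zero (by omega) _ _,
      fun _ => rfl⟩

lemma smul (a : ℝ) : ∀ {N c c' : ℕ} {f : (Fin c → Fin d → ℝ) → (Fin c' → Fin d → ℝ)},
    InSigma σ d N c c' f → InSigma σ d N c c' (fun x => a • f x)
  | 1, _, _, _, hf => IsConvLayer.smul a hf
  | _ + 2, _, _, _, ⟨c₁, C, hC, g, hg, hfg⟩ =>
      ⟨c₁, C, hC, fun y => a • g y, smul a hg, fun x => by simp only [hfg]⟩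

lemma comp_reindex {c₀ c c' : ℕ} (e : Fin c₀ → Fin c) :
    ∀ {N : ℕ} {f : (Fin c₀ → Fin d → ℝ) → (Fin c' → Fin d → ℝ)},
      InSigma σ d N c₀ c' f → InSigma σ d N c c' (fun x => f (x ∘ e))
  | 1, _, hf => IsConvLayer.comp_reindex e hf
  | _ + 2, _, ⟨c₁, _, hC, g, hg, hfg⟩ =>
      ⟨c₁, _, hC.comp_reindex e, g, hg, fun x => hfg (x ∘ e)⟩

lemma add : ∀ {N c c' : ℕ} {f g : (Fin c → Fin d → ℝ) → (Fin c' → Fin d → ℝ)},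
    InSigma σ d N c c' f → InSigma σ d N c c' g → InSigma σ d N c c' (fun x => f x + g x)
  | 1, _, _, _, _, hf, hg => IsConvLayer.add hf hg
  | _ + 2, _, _, _, _, ⟨cf, Cf, hCf, gf, hgf, hf⟩, ⟨cg, Cg, hCg, gg, hgg, hg⟩ => by
      refine ⟨cf + cg, _, hCf.append hCg,
        fun y => gf (y ∘ Fin.castAdd cg) + gg (y ∘ Fin.natAdd cf),
        add (hgf.comp_reindex _) (hgg.comp_reindex _), fun x => ?_⟩
      simp only [hf, hg]
      congr <;> funext i p <;> simp only [Function.comp_apply, Fin.append_left, Fin.append_right]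

end InSigma

theorem InSigma_vectorSpace (σ : ℝ → ℝ) (d N c c' : ℕ) (hN : 1 ≤ N) :
    InSigma σ d N c c' (fun _ => 0) ∧
    (∀ (a : ℝ) (f : (Fin c → Fin d → ℝ) → (Fin c' → Fin d → ℝ)),
      InSigma σ d N c c' f → InSigma σ d N c c' (fun x => a • f x)) ∧
    (∀ f g : (Fin c → Fin d → ℝ) → (Fin c' → Fin d → ℝ),
      InSigma σ d N c c' f → InSigma σ d N c c' g →
        InSigma σ d N c c' (fun x => f x + g x)) :=
  ⟨InSigma.zero hN c c', fun a _ hf => hf.smul a, fun _ _ hf hg => hf.add hg⟩
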